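/- arXiv:2402.02211 — 3 statements merged into one kernel-verified Lean document; each statement's English description precedes it below -/
import Mathlib

section
/- The second moment of the L²(D) error of the importance-weighted score satisfies E_{g ∼ p^{⊗K}}[ Δ(g)² ] ≤ C² · M² / K, where Δ(g) := ‖F − h_g‖ and h_g x y := ∑_{i=1}^K (q g_i / (K · p g_i)) · f x y g_i. -/
open MeasureTheory

/-- Variance bound for the mean of `K` iid samples: core algebraic lemma. -/
private lemma qrts_var_core {G : Type*} [Fintype G] (K : ℕ) (hK : 0 < K)
    (p X : G → ℝ) (hp0 : ∀ g, 0 ≤ p g) (hp1 : ∑ g, p g = 1)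
    (B : ℝ) (hX2 : ∀ g, p g * X g ^ 2 ≤ p g * B) :
    ∑ g : Fin K → G, (∏ i, p (g i)) *
      ((∑ g', p g' * X g') - (1 / (K : ℝ)) * ∑ i, X (g i)) ^ 2 ≤ B / K := by
  classical
  have hK' : (K : ℝ) ≠ 0 := Nat.cast_ne_zero.mpr hK.ne'
  set m : ℝ := ∑ g', p g' * X g' with hm
  set Y : G → ℝ := fun x => m - X x with hY
  have hY0 : ∑ x, p x * Y x = 0 := by
    simp only [hY, mul_sub]
    rw [Finset.sum_sub_distrib, ← Finset.sum_mul, hp1, one_mul, ← hm, sub_self]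
  set V : ℝ := ∑ x, p x * Y x ^ 2 with hV
  have hterm : ∀ i j : Fin K,
      ∑ g : Fin K → G, (∏ k, p (g k)) * (Y (g i) * Y (g j))
        = if i = j then V else 0 := by
    intro i j
    have h1 : ∀ g : Fin K → G, (∏ k, p (g k)) * (Y (g i) * Y (g j))
        = ∏ k, (p (g k) * ((if i = k then Y (g k) else 1)
            * (if j = k then Y (g k) else 1))) := by
      intro g
      rw [Finset.prod_mul_distrib, Finset.prod_mul_distrib,
        Finset.prod_ite_eq, Finset.prod_ite_eq]
      simp
    simp only [h1]
    rw [← Fintype.piFinset_univ, ← Finset.prod_univ_sum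
      (fun _ : Fin K => (Finset.univ : Finset G))
      (fun k y => p y * ((if i = k then Y y else 1) * if j = k then Y y else 1))]
    by_cases hij : i = j
    · subst hij
      rw [if_pos rfl, Finset.prod_eq_single i]
      · rw [hV]
        refine Finset.sum_congr rfl fun x _ => ?_
        have e : (if i = i then Y x else 1) = Y x := if_pos rfl
        rw [e]; ring
      · intro k _ hki
        have hik : ¬ i = k := fun e => hki e.symm
        simp only [if_neg hik, one_mul, mul_one]
        exact hp1
      · intro hni; exact absurd (Finset.mem_univ i) hni
    · rw [if_neg hij]
      apply Finset.prod_eq_zero (Finset.mem_univ i)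
      simp only [if_pos rfl, if_neg (Ne.symm hij), mul_one]
      exact hY0
  have expand : ∀ g : Fin K → G,
      (m - (1 / (K : ℝ)) * ∑ i, X (g i)) ^ 2
        = (1 / (K : ℝ)) ^ 2 * ∑ i, ∑ j, Y (g i) * Y (g j) := by
    intro g
    have h2 : m - (1 / (K : ℝ)) * ∑ i, X (g i) = (1 / (K : ℝ)) * ∑ i, Y (g i) := by
      simp only [hY]
      rw [Finset.sum_sub_distrib, Finset.sum_const, Finset.card_univ,
        Fintype.card_fin, nsmul_eq_mul]
      field_simp
    rw [h2, mul_pow, pow_two (∑ i, Y (g i)), Finset.sum_mul_sum]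
  calc ∑ g : Fin K → G, (∏ i, p (g i)) *
        (m - (1 / (K : ℝ)) * ∑ i, X (g i)) ^ 2
      = ∑ g : Fin K → G, ∑ i : Fin K, ∑ j : Fin K,
          (1 / (K : ℝ)) ^ 2 * ((∏ k, p (g k)) * (Y (g i) * Y (g j))) := by
        simp only [expand]
        simp only [Finset.mul_sum]
        exact Finset.sum_congr rfl fun g _ => Finset.sum_congr rfl fun i _ =>
          Finset.sum_congr rfl fun j _ => by ring
    _ = ∑ i : Fin K, ∑ j : Fin K, (1 / (K : ℝ)) ^ 2 *
          ∑ g : Fin K → G, (∏ k, p (g k)) * (Y (g i) * Y (g j)) := by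
        rw [Finset.sum_comm]
        refine Finset.sum_congr rfl fun i _ => ?_
        rw [Finset.sum_comm]
        refine Finset.sum_congr rfl fun j _ => ?_
        rw [Finset.mul_sum]
    _ = ∑ i : Fin K, (1 / (K : ℝ)) ^ 2 * V := by
        refine Finset.sum_congr rfl fun i _ => ?_
        simp only [hterm]
        rw [← Finset.mul_sum, Finset.sum_ite_eq, if_pos (Finset.mem_univ i)]
    _ = V / K := by
        rw [Finset.sum_const, Finset.card_univ, Fintype.card_fin, nsmul_eq_mul]
        field_simp
    _ ≤ B / K := by
        have h2 : ∑ x, p x * X x ^ 2 ≤ B := by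
          calc ∑ x, p x * X x ^ 2 ≤ ∑ x, p x * B := Finset.sum_le_sum fun x _ => hX2 x
            _ = B := by rw [← Finset.sum_mul, hp1, one_mul]
        have h1 : V = (∑ x, p x * X x ^ 2) - m ^ 2 := by
          rw [hV]
          have e : ∀ x, p x * Y x ^ 2
              = p x * X x ^ 2 - 2 * m * (p x * X x) + m ^ 2 * p x := by
            intro x; simp only [hY]; ring
          simp only [e]
          rw [Finset.sum_add_distrib, Finset.sum_sub_distrib, ← Finset.mul_sum,
            ← Finset.mul_sum, ← hm, hp1]
          ring
        have hVB : V ≤ B := by nlinarith [sq_nonneg m]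
        exact div_le_div_of_nonneg_right hVB (by positivity) |>.trans_eq rfl

/-- The second moment of the L²(D) error of the importance-weighted score
satisfies `E_{g ∼ p^{⊗K}}[Δ(g)²] ≤ C²·M²/K`, where `Δ(g) = ‖F − h_g‖` and
`h_g x y = ∑ᵢ (q gᵢ / (K · p gᵢ)) · f x y gᵢ`. -/
theorem qrts_second_moment_error_bound
    {G X Y : Type*} [Fintype G] [Nonempty G] [Fintype X] [Nonempty X]
    [Fintype Y] [Nonempty Y]
    [MeasurableSpace G] [MeasurableSingletonClass G]
    [MeasurableSpace X] [MeasurableSpace Y]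
    (f : X → Y → G → ℝ) (M : ℝ) (hM : 0 < M)
    (hf0 : ∀ x y g, 0 ≤ f x y g) (hfM : ∀ x y g, f x y g ≤ M)
    (p q : G → ℝ)
    (hp0 : ∀ g, 0 < p g) (hq0 : ∀ g, 0 ≤ q g)
    (hp1 : ∑ g, p g = 1) (hq1 : ∑ g, q g = 1)
    -- `C = max_g q g / p g`, the exponential of the ∞-order Rényi divergence
    (C : ℝ) (hC : C = Finset.univ.sup' Finset.univ_nonempty (fun g => q g / p g))
    -- the measure on `G` induced by the probability mass function `p`
    (μ : Measure G)
    (hμ : μ = Measure.count.withDensity (fun g => ENNReal.ofReal (p g)))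
    -- the latent objective
    (F : X → Y → ℝ) (hF : F = fun x y => ∑ g, q g * f x y g)
    -- the measure on `X × Y` defining the L² norm
    (D : Measure (X × Y)) [IsProbabilityMeasure D]
    (K : ℕ) (hK : 0 < K)
    -- the importance-weighted score and its L²(D) error
    (h : (Fin K → G) → X → Y → ℝ)
    (hh : ∀ g x y, h g x y = ∑ i, (q (g i) / (K * p (g i))) * f x y (g i))
    (Δ : (Fin K → G) → ℝ)
    (hΔ : ∀ g, Δ g = Real.sqrt (∫ z, (F z.1 z.2 - h g z.1 z.2) ^ 2 ∂D)) :
    (∫ g, (Δ g) ^ 2 ∂(Measure.pi fun _ : Fin K => μ)) ≤ C ^ 2 * M ^ 2 / K := by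
  classical
  have hK' : (K : ℝ) ≠ 0 := Nat.cast_ne_zero.mpr hK.ne'
  -- μ is a probability measure
  haveI hμprob : IsProbabilityMeasure μ := by
    constructor
    rw [hμ, withDensity_apply _ MeasurableSet.univ, Measure.restrict_univ,
      lintegral_count, tsum_fintype,
      ← ENNReal.ofReal_sum_of_nonneg (fun i _ => (hp0 i).le), hp1, ENNReal.ofReal_one]
  set ν : Measure (Fin K → G) := Measure.pi fun _ : Fin K => μ with hν
  haveI : IsProbabilityMeasure ν := by rw [hν]; infer_instance
  -- singleton masses
  have hμs : ∀ x : G, μ {x} = ENNReal.ofReal (p x) := by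
    intro x
    rw [hμ, withDensity_apply _ (measurableSet_singleton x), lintegral_singleton,
      Measure.count_singleton, mul_one]
  have hνs : ∀ g : Fin K → G, ν {g} = ENNReal.ofReal (∏ i, p (g i)) := by
    intro g
    rw [hν, ← Set.univ_pi_singleton g, Measure.pi_pi]
    simp only [hμs]
    rw [ENNReal.ofReal_prod_of_nonneg (fun i _ => (hp0 (g i)).le)]
  -- the outer integral is a finite sum
  have hsum : (∫ g, (Δ g) ^ 2 ∂ν)
      = ∑ g : Fin K → G, (∏ i, p (g i)) * (Δ g) ^ 2 := by
    rw [integral_fintype (Integrable.of_finite)]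
    refine Finset.sum_congr rfl fun g _ => ?_
    rw [measureReal_def, hνs g, ENNReal.toReal_ofReal (Finset.prod_nonneg fun i _ => (hp0 (g i)).le),
      smul_eq_mul]
  -- Δ g ^ 2 is the inner integral
  have hΔsq : ∀ g, (Δ g) ^ 2 = ∫ z, (F z.1 z.2 - h g z.1 z.2) ^ 2 ∂D := by
    intro g
    rw [hΔ g, Real.sq_sqrt (integral_nonneg fun z => sq_nonneg _)]
  -- pointwise (in z) variance bound
  have hpt : ∀ z : X × Y,
      ∑ g : Fin K → G, (∏ i, p (g i)) * (F z.1 z.2 - h g z.1 z.2) ^ 2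
        ≤ C ^ 2 * M ^ 2 / K := by
    intro z
    set Xv : G → ℝ := fun g' => q g' / p g' * f z.1 z.2 g' with hXv
    have hwC : ∀ g', q g' / p g' ≤ C := fun g' =>
      hC ▸ Finset.le_sup' (fun g => q g / p g) (Finset.mem_univ g')
    have hC0 : 0 ≤ C := le_trans (div_nonneg (hq0 (Classical.arbitrary G))
      (hp0 _).le) (hwC _)
    have hFe : F z.1 z.2 = ∑ g', p g' * Xv g' := by
      rw [hF]
      refine Finset.sum_congr rfl fun g' _ => ?_
      simp only [hXv]
      rw [show p g' * (q g' / p g' * f z.1 z.2 g')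
          = p g' / p g' * (q g' * f z.1 z.2 g') by ring,
        div_self (hp0 g').ne', one_mul]
    have hhe : ∀ g : Fin K → G, h g z.1 z.2 = (1 / (K : ℝ)) * ∑ i, Xv (g i) := by
      intro g
      rw [hh, Finset.mul_sum]
      refine Finset.sum_congr rfl fun i _ => ?_
      simp only [hXv]
      field_simp
      try ring
    have hX2 : ∀ g', p g' * Xv g' ^ 2 ≤ p g' * (C ^ 2 * M ^ 2) := by
      intro g'
      refine mul_le_mul_of_nonneg_left ?_ (hp0 g').le
      have h0 : 0 ≤ Xv g' := mul_nonneg (div_nonneg (hq0 g') (hp0 g').le)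
        (hf0 z.1 z.2 g')
      have hle : Xv g' ≤ C * M := mul_le_mul (hwC g') (hfM z.1 z.2 g')
        (hf0 z.1 z.2 g') hC0
      calc Xv g' ^ 2 ≤ (C * M) ^ 2 := pow_le_pow_left₀ h0 hle 2
        _ = C ^ 2 * M ^ 2 := by ring
    have := qrts_var_core K hK p Xv (fun g' => (hp0 g').le) hp1
      (C ^ 2 * M ^ 2) hX2
    calc ∑ g : Fin K → G, (∏ i, p (g i)) * (F z.1 z.2 - h g z.1 z.2) ^ 2
        = ∑ g : Fin K → G, (∏ i, p (g i)) *
            ((∑ g', p g' * Xv g') - (1 / (K : ℝ)) * ∑ i, Xv (g i)) ^ 2 := by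
          refine Finset.sum_congr rfl fun g _ => ?_
          rw [hFe, hhe g]
      _ ≤ C ^ 2 * M ^ 2 / K := this
  -- put things together
  rw [hsum]
  simp only [hΔsq]
  set S : Finset (Fin K → G) := Finset.univ.filter
    (fun g => Integrable (fun z : X × Y => (F z.1 z.2 - h g z.1 z.2) ^ 2) D) with hS
  have hsplit : ∑ g : Fin K → G, (∏ i, p (g i)) *
      ∫ z, (F z.1 z.2 - h g z.1 z.2) ^ 2 ∂D
      = ∑ g ∈ S, (∏ i, p (g i)) * ∫ z, (F z.1 z.2 - h g z.1 z.2) ^ 2 ∂D := by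
    symm
    refine Finset.sum_subset (Finset.subset_univ S) ?_
    intro g _ hgS
    have : ¬ Integrable (fun z : X × Y => (F z.1 z.2 - h g z.1 z.2) ^ 2) D := by
      intro hint
      exact hgS (Finset.mem_filter.mpr ⟨Finset.mem_univ g, hint⟩)
    rw [integral_undef this, mul_zero]
  rw [hsplit]
  have hintS : ∀ g ∈ S, Integrable
      (fun z : X × Y => (∏ i, p (g i)) * (F z.1 z.2 - h g z.1 z.2) ^ 2) D := by
    intro g hg
    exact ((Finset.mem_filter.mp hg).2).const_mul _
  have hswap : ∑ g ∈ S, (∏ i, p (g i)) * ∫ z, (F z.1 z.2 - h g z.1 z.2) ^ 2 ∂D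
      = ∫ z, ∑ g ∈ S, (∏ i, p (g i)) * (F z.1 z.2 - h g z.1 z.2) ^ 2 ∂D := by
    rw [integral_finset_sum S hintS]
    refine Finset.sum_congr rfl fun g hg => ?_
    rw [integral_const_mul]
  rw [hswap]
  have hub : ∀ z : X × Y,
      ∑ g ∈ S, (∏ i, p (g i)) * (F z.1 z.2 - h g z.1 z.2) ^ 2
        ≤ C ^ 2 * M ^ 2 / K := by
    intro z
    refine le_trans (Finset.sum_le_sum_of_subset_of_nonneg (Finset.subset_univ S)
      (fun g _ _ => mul_nonneg (Finset.prod_nonneg fun i _ => (hp0 (g i)).le)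
        (sq_nonneg _))) (hpt z)
  calc (∫ z, ∑ g ∈ S, (∏ i, p (g i)) * (F z.1 z.2 - h g z.1 z.2) ^ 2 ∂D)
      ≤ ∫ _ : X × Y, C ^ 2 * M ^ 2 / K ∂D := by
        refine integral_mono (integrable_finset_sum S hintS)
          (integrable_const _) hub
    _ = C ^ 2 * M ^ 2 / K := by simp
end

section
/- Fix (x, y) ∈ X × Y with F x y > 0, let ε ∈ (0,1), and let C₁ ≥ 1 be a constant such that (q g / p g) · f x y g ≤ C₁ for all g ∈ G. Then the importance-weighted score concentrates multiplicatively around the latent objective: p^{⊗K}{ g ∈ G^K : |h_g x y − F x y| > ε · F x y } ≤ 2 · exp( − K · F x y · (ε/C₁)² / ( C₁ · (2 + ε/C₁) ) ), where h_g x y := ∑_{i=1}^K (q g_i / (K · p g_i)) · f x y g_i. -/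
open MeasureTheory

private lemma qrts_core_ineq {δ s : ℝ} (h0 : 0 < δ) (h1 : δ < 1) (hs : s = 2*δ/(2+δ)) :
    s^2/2 + 2*s^3/9 + δ^2/(2+δ) ≤ s * δ := by
  have h2 : (0:ℝ) < 2 + δ := by linarith
  subst hs
  rw [div_pow, div_pow]
  have key : ((2*δ)^2 / ((2+δ)^2) / 2 + 2 * ((2*δ)^3 / ((2+δ)^3)) / 9 + δ^2/(2+δ)) * (2+δ)^3
      ≤ (2*δ/(2+δ)*δ) * (2+δ)^3 := by
    have e1 : ((2*δ)^2 / ((2+δ)^2) / 2 + 2 * ((2*δ)^3 / ((2+δ)^3)) / 9 + δ^2/(2+δ)) * (2+δ)^3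
        = 2*δ^2*(2+δ) + 16*δ^3/9 + δ^2*(2+δ)^2 := by field_simp; ring
    have e2 : (2*δ/(2+δ)*δ) * (2+δ)^3 = 2*δ^2*(2+δ)^2 := by field_simp
    rw [e1, e2]; nlinarith [sq_nonneg δ, mul_pos h0 h0]
  have h3 : (0:ℝ) < (2+δ)^3 := by positivity
  exact le_of_mul_le_mul_right key h3

private lemma qrts_exp_cubic_bound {x : ℝ} (hx : |x| ≤ 1) :
    Real.exp x ≤ 1 + x + x^2/2 + |x|^3 * (2/9) := by
  have h := Real.exp_bound hx (n := 3) (by norm_num)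
  have h2 : ∑ m ∈ Finset.range 3, x ^ m / m.factorial = 1 + x + x^2/2 := by
    rw [Finset.sum_range_succ, Finset.sum_range_succ, Finset.sum_range_succ,
      Finset.sum_range_zero]
    norm_num [Nat.factorial]
  rw [h2] at h
  have h3 := (abs_sub_le_iff.mp h).1
  have hval : ((Nat.succ 3 : ℕ) : ℝ) / ((Nat.factorial 3 : ℕ) * (3:ℕ)) = 2/9 := by
    norm_num [Nat.factorial]
  rw [hval] at h3
  linarith

/-- Pointwise multiplicative concentration of the importance-weighted score
(the Chernoff-type bound in the proof of Lemma 2 of the paper): for a fixed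
`(x, y)` with `F x y > 0`,
`p^{⊗K}{ g : |h_g x y − F x y| > ε F x y } ≤ 2 exp(−K F x y (ε/C₁)² / (C₁(2 + ε/C₁)))`. -/
theorem qrts_pointwise_concentration
    {G X Y : Type*} [Fintype G] [Nonempty G] [Fintype X] [Nonempty X]
    [Fintype Y] [Nonempty Y]
    [MeasurableSpace G] [MeasurableSingletonClass G]
    (f : X → Y → G → ℝ) (M : ℝ) (hM : 0 < M)
    (hf0 : ∀ x y g, 0 ≤ f x y g) (hfM : ∀ x y g, f x y g ≤ M)
    (p q : G → ℝ)
    (hp0 : ∀ g, 0 < p g) (hq0 : ∀ g, 0 ≤ q g)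
    (hp1 : ∑ g, p g = 1) (hq1 : ∑ g, q g = 1)
    -- the measure on `G` induced by the probability mass function `p`
    (μ : Measure G)
    (hμ : μ = Measure.count.withDensity (fun g => ENNReal.ofReal (p g)))
    -- the latent objective
    (F : X → Y → ℝ) (hF : F = fun x y => ∑ g, q g * f x y g)
    (K : ℕ)
    -- the importance-weighted score
    (h : (Fin K → G) → X → Y → ℝ)
    (hh : ∀ g x y, h g x y = ∑ i, (q (g i) / (K * p (g i))) * f x y (g i))
    (x : X) (y : Y) (hFxy : 0 < F x y)
    (ε : ℝ) (hε0 : 0 < ε) (hε1 : ε < 1)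
    (C₁ : ℝ) (hC₁ : 1 ≤ C₁)
    (hC₁bound : ∀ g : G, (q g / p g) * f x y g ≤ C₁) :
    ((Measure.pi fun _ : Fin K => μ)
        {g : Fin K → G | |h g x y - F x y| > ε * F x y}).toReal
      ≤ 2 * Real.exp (-(K : ℝ) * F x y * (ε / C₁) ^ 2 / (C₁ * (2 + ε / C₁))) := by
  classical
  have hC₁0 : (0:ℝ) < C₁ := lt_of_lt_of_le one_pos hC₁
  -- basic quantities
  set δ : ℝ := ε / C₁ with hδdef
  set s : ℝ := 2*δ/(2+δ) with hsdef
  have hδ0 : 0 < δ := div_pos hε0 hC₁0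
  have hδε : δ ≤ ε := div_le_self hε0.le hC₁
  have hδ1 : δ < 1 := lt_of_le_of_lt hδε hε1
  have h2δ : (0:ℝ) < 2 + δ := by linarith
  have hs0 : 0 < s := by positivity
  have hs1 : s ≤ 1 := by rw [hsdef, div_le_one h2δ]; linarith
  -- the importance weights
  set Z : G → ℝ := fun g => q g / p g * f x y g with hZdef
  have hZ0 : ∀ g, 0 ≤ Z g := fun g =>
    mul_nonneg (div_nonneg (hq0 g) (hp0 g).le) (hf0 x y g)
  have hZC : ∀ g, Z g ≤ C₁ := hC₁bound
  have hEZ : ∑ g, p g * Z g = F x y := by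
    rw [hF]
    refine Finset.sum_congr rfl fun g _ => ?_
    have hpg := (hp0 g).ne'
    simp only [hZdef]
    field_simp
  -- μ is a probability measure
  have hμs : ∀ g : G, μ {g} = ENNReal.ofReal (p g) := by
    intro g
    rw [hμ, withDensity_apply _ (measurableSet_singleton g), lintegral_singleton,
      Measure.count_singleton, mul_one]
  haveI hμprob : IsProbabilityMeasure μ := by
    constructor
    rw [hμ, withDensity_apply _ MeasurableSet.univ, Measure.restrict_univ,
      MeasureTheory.lintegral_count, tsum_fintype,
      ← ENNReal.ofReal_sum_of_nonneg (fun g _ => (hp0 g).le), hp1, ENNReal.ofReal_one]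
  set π : Measure (Fin K → G) := Measure.pi (fun _ : Fin K => μ) with hπdef
  haveI hπprob : IsProbabilityMeasure π := by
    rw [hπdef]; infer_instance
  have hπs : ∀ g : Fin K → G, π {g} = ∏ i, ENNReal.ofReal (p (g i)) := by
    intro g
    rw [hπdef, ← Set.univ_pi_singleton g, Measure.pi_pi]
    exact Finset.prod_congr rfl fun i _ => hμs (g i)
  -- the sum of the importance weights
  set S : (Fin K → G) → ℝ := fun g => ∑ i, Z (g i) with hSdef
  have hint : ∀ u : ℝ, Integrable (fun g => Real.exp (u * S g)) π := fun u =>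
    Integrable.of_finite
  -- the moment generating function of S under π
  have hmgf : ∀ u : ℝ,
      ProbabilityTheory.mgf S π u = (∑ g, p g * Real.exp (u * Z g)) ^ K := by
    intro u
    rw [ProbabilityTheory.mgf, integral_fintype (hint u)]
    simp only [Measure.real]
    have hterm : ∀ g : Fin K → G, (π {g}).toReal • Real.exp (u * S g)
        = ∏ i, (p (g i) * Real.exp (u * Z (g i))) := by
      intro g
      rw [hπs g, ENNReal.toReal_prod, smul_eq_mul, hSdef]
      simp only [ENNReal.toReal_ofReal (hp0 _).le]
      rw [Finset.mul_sum, Real.exp_sum, ← Finset.prod_mul_distrib]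
    simp_rw [hterm]
    rw [← Fintype.prod_sum (fun (_ : Fin K) (g : G) => p g * Real.exp (u * Z g)),
      Finset.prod_const, Finset.card_univ, Fintype.card_fin]
  -- the chord bound on the exponential
  have hchord : ∀ (u : ℝ) (g : G),
      Real.exp (u * Z g) ≤ 1 + Z g / C₁ * (Real.exp (u * C₁) - 1) := by
    intro u g
    have ha : 0 ≤ Z g / C₁ := div_nonneg (hZ0 g) hC₁0.le
    have hb : 0 ≤ 1 - Z g / C₁ := by
      have := (div_le_one hC₁0).2 (hZC g); linarith
    have key := convexOn_exp.2 (Set.mem_univ (u * C₁)) (Set.mem_univ (0:ℝ)) ha hb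
      (by ring)
    simp only [smul_eq_mul, mul_zero, add_zero, Real.exp_zero, mul_one] at key
    have harg : Z g / C₁ * (u * C₁) = u * Z g := by field_simp
    rw [harg] at key
    linarith
  -- the bound on the one-step mgf
  have hm : ∀ u : ℝ, ∑ g, p g * Real.exp (u * Z g)
      ≤ Real.exp (F x y / C₁ * (Real.exp (u * C₁) - 1)) := by
    intro u
    have h1 : ∑ g, p g * Real.exp (u * Z g)
        ≤ ∑ g, p g * (1 + Z g / C₁ * (Real.exp (u * C₁) - 1)) :=
      Finset.sum_le_sum fun g _ => mul_le_mul_of_nonneg_left (hchord u g) (hp0 g).le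
    have h2 : ∑ g, p g * (1 + Z g / C₁ * (Real.exp (u * C₁) - 1))
        = 1 + F x y / C₁ * (Real.exp (u * C₁) - 1) := by
      have e : ∀ g : G, p g * (1 + Z g / C₁ * (Real.exp (u * C₁) - 1))
          = p g + (p g * Z g) * ((Real.exp (u * C₁) - 1) / C₁) := by
        intro g; field_simp
      simp_rw [e]
      rw [Finset.sum_add_distrib, hp1, ← Finset.sum_mul, hEZ]
      ring
    calc ∑ g, p g * Real.exp (u * Z g)
        ≤ 1 + F x y / C₁ * (Real.exp (u * C₁) - 1) := h2 ▸ h1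
      _ ≤ Real.exp (F x y / C₁ * (Real.exp (u * C₁) - 1)) := by
          have := Real.add_one_le_exp (F x y / C₁ * (Real.exp (u * C₁) - 1))
          linarith
  have hmnonneg : ∀ u : ℝ, 0 ≤ ∑ g, p g * Real.exp (u * Z g) := fun u =>
    Finset.sum_nonneg fun g _ => mul_nonneg (hp0 g).le (Real.exp_pos _).le
  -- the analytic core, both tails
  have hcore := qrts_core_ineq hδ0 hδ1 hsdef
  have hsδε : s * δ ≤ s * ε := mul_le_mul_of_nonneg_left hδε hs0.le
  have habs : |s| ≤ 1 := by rw [abs_of_pos hs0]; exact hs1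
  have habs' : |(-s)| ≤ 1 := by rw [abs_neg]; exact habs
  have hexp1 : Real.exp s - 1 - s * (1 + ε) ≤ -(δ^2/(2+δ)) := by
    have hb := qrts_exp_cubic_bound habs
    rw [abs_of_pos hs0] at hb
    nlinarith
  have hexp2 : Real.exp (-s) - 1 + s - s * ε ≤ -(δ^2/(2+δ)) := by
    have hb := qrts_exp_cubic_bound habs'
    rw [abs_neg, abs_of_pos hs0] at hb
    nlinarith
  -- Chernoff parameters
  set t : ℝ := s / C₁ with htdef
  have ht0 : 0 ≤ t := by positivity
  have htC : t * C₁ = s := by rw [htdef]; field_simp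
  have hKF : 0 ≤ (K:ℝ) * F x y / C₁ := by positivity
  set E₀ : ℝ := -(K : ℝ) * F x y * δ ^ 2 / (C₁ * (2 + δ)) with hE₀def
  -- upper tail
  have hup : (π {g | (K:ℝ) * ((1 + ε) * F x y) ≤ S g}).toReal ≤ Real.exp E₀ := by
    have hc := ProbabilityTheory.measure_ge_le_exp_mul_mgf (X := S) (μ := π)
      ((K:ℝ) * ((1 + ε) * F x y)) ht0 (hint t)
    rw [hmgf t] at hc
    refine hc.trans ?_
    have hmK : (∑ g, p g * Real.exp (t * Z g)) ^ K
        ≤ Real.exp ((K:ℝ) * (F x y / C₁ * (Real.exp s - 1))) := by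
      rw [Real.exp_nat_mul]
      exact pow_le_pow_left₀ (hmnonneg t) (htC ▸ hm t) K
    calc Real.exp (-t * ((K:ℝ) * ((1 + ε) * F x y))) * (∑ g, p g * Real.exp (t * Z g)) ^ K
        ≤ Real.exp (-t * ((K:ℝ) * ((1 + ε) * F x y)))
            * Real.exp ((K:ℝ) * (F x y / C₁ * (Real.exp s - 1))) := by
          exact mul_le_mul_of_nonneg_left hmK (Real.exp_pos _).le
      _ = Real.exp (-t * ((K:ℝ) * ((1 + ε) * F x y))
            + (K:ℝ) * (F x y / C₁ * (Real.exp s - 1))) := (Real.exp_add _ _).symm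
      _ ≤ Real.exp E₀ := by
          apply Real.exp_le_exp.2
          have harg : -t * ((K:ℝ) * ((1 + ε) * F x y))
              + (K:ℝ) * (F x y / C₁ * (Real.exp s - 1))
              = (K:ℝ) * F x y / C₁ * (Real.exp s - 1 - s * (1 + ε)) := by
            rw [htdef]; field_simp; ring
          have harg2 : E₀ = (K:ℝ) * F x y / C₁ * (-(δ^2/(2+δ))) := by
            rw [hE₀def]; field_simp
          rw [harg, harg2]
          exact mul_le_mul_of_nonneg_left hexp1 hKF
  -- lower tail
  have hlow : (π {g | S g ≤ (K:ℝ) * ((1 - ε) * F x y)}).toReal ≤ Real.exp E₀ := by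
    have hc := ProbabilityTheory.measure_le_le_exp_mul_mgf (X := S) (μ := π)
      ((K:ℝ) * ((1 - ε) * F x y)) (neg_nonpos.2 ht0) (hint (-t))
    rw [hmgf (-t)] at hc
    refine hc.trans ?_
    have hmK : (∑ g, p g * Real.exp (-t * Z g)) ^ K
        ≤ Real.exp ((K:ℝ) * (F x y / C₁ * (Real.exp (-s) - 1))) := by
      rw [Real.exp_nat_mul]
      refine pow_le_pow_left₀ (hmnonneg (-t)) ?_ K
      have := hm (-t)
      rwa [show -t * C₁ = -s by rw [← htC]; ring] at this
    calc Real.exp (-(-t) * ((K:ℝ) * ((1 - ε) * F x y))) * (∑ g, p g * Real.exp (-t * Z g)) ^ K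
        ≤ Real.exp (-(-t) * ((K:ℝ) * ((1 - ε) * F x y)))
            * Real.exp ((K:ℝ) * (F x y / C₁ * (Real.exp (-s) - 1))) := by
          exact mul_le_mul_of_nonneg_left hmK (Real.exp_pos _).le
      _ = Real.exp (-(-t) * ((K:ℝ) * ((1 - ε) * F x y))
            + (K:ℝ) * (F x y / C₁ * (Real.exp (-s) - 1))) := (Real.exp_add _ _).symm
      _ ≤ Real.exp E₀ := by
          apply Real.exp_le_exp.2
          have harg : -(-t) * ((K:ℝ) * ((1 - ε) * F x y))
              + (K:ℝ) * (F x y / C₁ * (Real.exp (-s) - 1))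
              = (K:ℝ) * F x y / C₁ * (Real.exp (-s) - 1 + s - s * ε) := by
            rw [htdef]; field_simp; ring
          have harg2 : E₀ = (K:ℝ) * F x y / C₁ * (-(δ^2/(2+δ))) := by
            rw [hE₀def]; field_simp
          rw [harg, harg2]
          exact mul_le_mul_of_nonneg_left hexp2 hKF
  -- the event is contained in the union of the two tails
  have hsub : {g : Fin K → G | |h g x y - F x y| > ε * F x y}
      ⊆ {g | (K:ℝ) * ((1 + ε) * F x y) ≤ S g} ∪ {g | S g ≤ (K:ℝ) * ((1 - ε) * F x y)} := by
    intro g hg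
    simp only [Set.mem_setOf_eq, gt_iff_lt] at hg
    have hKh : (K:ℝ) * h g x y = S g := by
      rw [hh, hSdef, Finset.mul_sum]
      refine Finset.sum_congr rfl fun i _ => ?_
      have hK0 : (K:ℝ) ≠ 0 := Nat.cast_ne_zero.2 i.pos.ne'
      have hpg := (hp0 (g i)).ne'
      simp only [hZdef]
      field_simp
    have hKnn : (0:ℝ) ≤ (K:ℝ) := Nat.cast_nonneg K
    rcases lt_abs.mp hg with hcase | hcase
    · left
      simp only [Set.mem_setOf_eq]
      have : (1 + ε) * F x y ≤ h g x y := by linarith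
      calc (K:ℝ) * ((1 + ε) * F x y) ≤ (K:ℝ) * h g x y :=
            mul_le_mul_of_nonneg_left this hKnn
        _ = S g := hKh
    · right
      simp only [Set.mem_setOf_eq]
      have : h g x y ≤ (1 - ε) * F x y := by linarith
      calc S g = (K:ℝ) * h g x y := hKh.symm
        _ ≤ (K:ℝ) * ((1 - ε) * F x y) := mul_le_mul_of_nonneg_left this hKnn
  -- combine
  have hmono : π {g : Fin K → G | |h g x y - F x y| > ε * F x y}
      ≤ π {g | (K:ℝ) * ((1 + ε) * F x y) ≤ S g}
        + π {g | S g ≤ (K:ℝ) * ((1 - ε) * F x y)} :=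
    (measure_mono hsub).trans (measure_union_le _ _)
  have hfin1 : π {g | (K:ℝ) * ((1 + ε) * F x y) ≤ S g} ≠ ⊤ := measure_ne_top _ _
  have hfin2 : π {g | S g ≤ (K:ℝ) * ((1 - ε) * F x y)} ≠ ⊤ := measure_ne_top _ _
  have htoReal : (π {g : Fin K → G | |h g x y - F x y| > ε * F x y}).toReal
      ≤ (π {g | (K:ℝ) * ((1 + ε) * F x y) ≤ S g}).toReal
        + (π {g | S g ≤ (K:ℝ) * ((1 - ε) * F x y)}).toReal := by
    have := ENNReal.toReal_mono (ENNReal.add_ne_top.2 ⟨hfin1, hfin2⟩) hmono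
    rwa [ENNReal.toReal_add hfin1 hfin2] at this
  have hgoal : -(K : ℝ) * F x y * δ ^ 2 / (C₁ * (2 + δ)) = E₀ := rfl
  calc (π {g : Fin K → G | |h g x y - F x y| > ε * F x y}).toReal
      ≤ (π {g | (K:ℝ) * ((1 + ε) * F x y) ≤ S g}).toReal
        + (π {g | S g ≤ (K:ℝ) * ((1 - ε) * F x y)}).toReal := htoReal
    _ ≤ Real.exp E₀ + Real.exp E₀ := add_le_add hup hlow
    _ = 2 * Real.exp E₀ := by ring
end

section
/- Let h : X → Y → ℝ and suppose |h x y − F x y| ≤ ε · F x y for all (x, y), where ε ∈ [0,1) and F x y > 0 for all (x, y). Let β ∈ (0,1] and let M : X → Y be any decision rule that is a β-approximate minimizer of the score, i.e., β · h x (M x) ≤ min over y ∈ Y of h x y, for every x ∈ X. Then for every probability mass function D_X on X, the expected optimization ratio satisfies ∑_{x ∈ X} D_X x · ( (min over y ∈ Y of F x y) / F x (M x) ) ≥ β · (1−ε)/(1+ε). -/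
/-!
On every query `x`, the `(1 ± ε)` sandwich transfers the `β`-approximate optimality of `Mdl x`
for the score `h` to the objective `F`, at the price of a factor `(1 - ε) / (1 + ε)`:
`β (1 - ε) F x (Mdl x) ≤ β h x (Mdl x) ≤ min h x ≤ (1 + ε) min F x`.
The pointwise bound on the ratio then survives averaging against any probability vector.
-/

open Finset

lemma one_sub_mul_le_of_abs_sub_le {a b ε : ℝ} (h : |a - b| ≤ ε * b) : (1 - ε) * b ≤ a := by
  linarith [(abs_sub_le_iff.mp h).2]

lemma le_one_add_mul_of_abs_sub_le {a b ε : ℝ} (h : |a - b| ≤ ε * b) : a ≤ (1 + ε) * b := by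
  linarith [(abs_sub_le_iff.mp h).1]

lemma le_sum_mul_of_forall_le {ι : Type*} {s : Finset ι} {w r : ι → ℝ} {c : ℝ}
    (hw0 : ∀ i ∈ s, 0 ≤ w i) (hw1 : ∑ i ∈ s, w i = 1) (hr : ∀ i ∈ s, c ≤ r i) :
    c ≤ ∑ i ∈ s, w i * r i :=
  calc c = ∑ i ∈ s, w i * c := by rw [← sum_mul, hw1, one_mul]
    _ ≤ ∑ i ∈ s, w i * r i :=
      sum_le_sum fun i hi => mul_le_mul_of_nonneg_left (hr i hi) (hw0 i hi)

section ApproxMinimizer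

variable {Y : Type*} {s : Finset Y} (hs : s.Nonempty) {F h : Y → ℝ} {ε : ℝ}

lemma inf'_div_one_add_le_inf' (hε : 0 ≤ ε) (happrox : ∀ y ∈ s, |h y - F y| ≤ ε * F y) :
    s.inf' hs h / (1 + ε) ≤ s.inf' hs F :=
  le_inf' hs _ fun y hy => by
    rw [div_le_iff₀ (by linarith), mul_comm]
    exact (inf'_le h hy).trans (le_one_add_mul_of_abs_sub_le (happrox y hy))

lemma le_inf'_div_of_approx_minimizer {β : ℝ} {m : Y} (hFm : 0 < F m) (hε : 0 ≤ ε) (hβ : 0 ≤ β)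
    (happrox : ∀ y, |h y - F y| ≤ ε * F y) (hm : β * h m ≤ s.inf' hs h) :
    β * ((1 - ε) / (1 + ε)) ≤ s.inf' hs F / F m := by
  rw [le_div_iff₀ hFm]
  calc β * ((1 - ε) / (1 + ε)) * F m = β * ((1 - ε) * F m) / (1 + ε) := by ring
    _ ≤ s.inf' hs h / (1 + ε) := by
      gcongr
      exact (mul_le_mul_of_nonneg_left (one_sub_mul_le_of_abs_sub_le (happrox m)) hβ).trans hm
    _ ≤ s.inf' hs F := inf'_div_one_add_le_inf' hs hε fun y _ => happrox y

end ApproxMinimizer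

theorem qrts_generalization_ratio_general
    {X Y : Type*} [Fintype X]
    [Fintype Y] [Nonempty Y]
    -- the latent objective
    (F : X → Y → ℝ)
    (hFpos : ∀ x y, 0 < F x y)
    (ε : ℝ) (hε0 : 0 ≤ ε)
    -- the score function, uniformly `ε`-multiplicatively close to `F`
    (h : X → Y → ℝ)
    (happrox : ∀ x y, |h x y - F x y| ≤ ε * F x y)
    (β : ℝ) (hβ0 : 0 < β)
    -- `Mdl` is a `β`-approximate minimizer of the score
    (Mdl : X → Y)
    (hMdl : ∀ x, β * h x (Mdl x) ≤
      Finset.univ.inf' Finset.univ_nonempty (fun y => h x y))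
    -- the query distribution
    (DX : X → ℝ) (hDX0 : ∀ x, 0 ≤ DX x) (hDX1 : ∑ x, DX x = 1) :
    (∑ x, DX x *
        (Finset.univ.inf' Finset.univ_nonempty (fun y => F x y) / F x (Mdl x)))
      ≥ β * ((1 - ε) / (1 + ε)) :=
  le_sum_mul_of_forall_le (fun x _ => hDX0 x) hDX1 fun x _ =>
    le_inf'_div_of_approx_minimizer _ (hFpos x (Mdl x)) hε0 hβ0.le (happrox x) (hMdl x)

/-- If the score `h` is a uniform `ε`-multiplicative approximation of the
latent objective `F`, then any decision rule `Mdl` that `β`-approximately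
minimizes `h` has expected optimization ratio at least `β (1−ε)/(1+ε)` under
any query distribution `D_X`. -/
theorem qrts_generalization_ratio
    {G X Y : Type*} [Fintype G] [Nonempty G] [Fintype X] [Nonempty X]
    [Fintype Y] [Nonempty Y]
    (f : X → Y → G → ℝ) (M : ℝ) (hM : 0 < M)
    (hf0 : ∀ x y g, 0 ≤ f x y g) (hfM : ∀ x y g, f x y g ≤ M)
    (q : G → ℝ) (hq0 : ∀ g, 0 ≤ q g) (hq1 : ∑ g, q g = 1)
    -- the latent objective
    (F : X → Y → ℝ) (hF : F = fun x y => ∑ g, q g * f x y g)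
    (hFpos : ∀ x y, 0 < F x y)
    (ε : ℝ) (hε0 : 0 ≤ ε) (hε1 : ε < 1)
    -- the score function, uniformly `ε`-multiplicatively close to `F`
    (h : X → Y → ℝ)
    (happrox : ∀ x y, |h x y - F x y| ≤ ε * F x y)
    (β : ℝ) (hβ0 : 0 < β) (hβ1 : β ≤ 1)
    -- `Mdl` is a `β`-approximate minimizer of the score
    (Mdl : X → Y)
    (hMdl : ∀ x, β * h x (Mdl x) ≤
      Finset.univ.inf' Finset.univ_nonempty (fun y => h x y))
    -- the query distribution
    (DX : X → ℝ) (hDX0 : ∀ x, 0 ≤ DX x) (hDX1 : ∑ x, DX x = 1) :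
    (∑ x, DX x *
        (Finset.univ.inf' Finset.univ_nonempty (fun y => F x y) / F x (Mdl x)))
      ≥ β * ((1 - ε) / (1 + ε)) :=
  qrts_generalization_ratio_general F hFpos ε hε0 h happrox β hβ0 Mdl hMdl DX hDX0 hDX1
end
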